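/- arXiv:1212.3958 — 6 statements merged into one kernel-verified Lean document; each statement's English description precedes it below -/
import Mathlib

section
/- Let L be a vector lattice of random variables and π: L → L' a monotone non-decreasing map. If π is continuous from below (i.e., X_n ↑ X implies π(X_n) ↑ π(X)), then π is order lower semicontinuous with respect to sequences uniformly bounded from below: whenever X_n ≥ c for all n and X_n order-converges to X, one has π(X) ≤ liminf_n π(X_n). -/
/-!
Let `Z_n = inf_{k ≥ n} X_k`. These tail infima are bounded below by `c`, measurable and
increase to `liminf_n X_n`, which equals `X` because `X - Y_n ≤ X_n ≤ X + Y_n` with `Y_n → 0`.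
Continuity from below gives `π(X) = sup_n π(Z_n)`, and monotonicity gives
`π(Z_n) ≤ π(X_k)` for `k ≥ n`, hence `π(X) ≤ sup_n inf_{k ≥ n} π(X_k) = liminf_n π(X_n)`.
-/

open MeasureTheory Filter Set Topology

noncomputable section

variable {Ω : Type*}

/-- The lattice of `m`-measurable random variables bounded from below
(possibly `+∞`-valued). -/
def Lbb (m : MeasurableSpace Ω) : Set (Ω → EReal) :=
  {X | Measurable[m] X ∧ ∃ c : ℝ, ∀ ω, (c : EReal) ≤ X ω}

namespace EReal

theorem tendsto_const_add_of_tendsto_zero {α : Type*} {l : Filter α} {x : EReal} {y : α → EReal}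
    (hy : Tendsto y l (𝓝 0)) : Tendsto (fun a => x + y a) l (𝓝 x) := by
  simpa [Function.comp_def] using
    (continuousAt_add (p := (x, 0)) (.inr zero_ne_bot) (.inr zero_ne_top)).tendsto.comp
      (tendsto_const_nhds.prodMk_nhds hy)

theorem tendsto_of_sub_le_of_le_add {α : Type*} {l : Filter α} {x : EReal} {u y : α → EReal}
    (hy : Tendsto y l (𝓝 0)) (h : ∀ a, x - y a ≤ u a ∧ u a ≤ x + y a) : Tendsto u l (𝓝 x) := by
  have hneg : Tendsto (fun a => -y a) l (𝓝 0) := by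
    simpa [Function.comp_def] using (continuous_neg.tendsto (0 : EReal)).comp hy
  exact tendsto_of_tendsto_of_tendsto_of_le_of_le (tendsto_const_add_of_tendsto_zero hneg)
    (tendsto_const_add_of_tendsto_zero hy) (fun a => (h a).1) (fun a => (h a).2)

end EReal

section LowerSemicontinuity

variable {F : MeasurableSpace Ω} (P : @Measure Ω F) (π : (Ω → EReal) → Ω → EReal)

def MonotoneAEOnLbb : Prop :=
  ∀ X ∈ Lbb F, ∀ Y ∈ Lbb F, (∀ ω, Y ω ≤ X ω) → ∀ᵐ ω ∂P, π Y ω ≤ π X ω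

def ContinuousFromBelowAEOnLbb : Prop :=
  ∀ (Zs : ℕ → Ω → EReal) (Z : Ω → EReal), (∀ n, Zs n ∈ Lbb F) → Z ∈ Lbb F →
    (∀ ω, Monotone fun n => Zs n ω) → (∀ ω, Z ω = ⨆ n, Zs n ω) →
    ∀ᵐ ω ∂P, π Z ω = ⨆ n, π (Zs n) ω

variable {P π}

theorem tailInf_mem_Lbb {Xs : ℕ → Ω → EReal} (hXs : ∀ n, Measurable (Xs n)) {c : ℝ}
    (hbd : ∀ n ω, (c : EReal) ≤ Xs n ω) (n : ℕ) : (fun ω => ⨅ k ≥ n, Xs k ω) ∈ Lbb F :=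
  ⟨.iInf fun k => .iInf fun _ => hXs k, c, fun ω => le_iInf₂ fun k _ => hbd k ω⟩

theorem liminf_mem_Lbb {Xs : ℕ → Ω → EReal} (hXs : ∀ n, Measurable (Xs n)) {c : ℝ}
    (hbd : ∀ n ω, (c : EReal) ≤ Xs n ω) : (fun ω => liminf (fun n => Xs n ω) atTop) ∈ Lbb F :=
  ⟨.liminf hXs, c, fun ω => le_liminf_of_le (by isBoundedDefault) (.of_forall fun n => hbd n ω)⟩

theorem ae_apply_liminf_le_liminf_apply (hmono : MonotoneAEOnLbb P π)
    (hcont : ContinuousFromBelowAEOnLbb P π) {Xs : ℕ → Ω → EReal} (hXs : ∀ n, Xs n ∈ Lbb F)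
    {c : ℝ} (hbd : ∀ n ω, (c : EReal) ≤ Xs n ω) :
    ∀ᵐ ω ∂P, π (fun ω => liminf (fun n => Xs n ω) atTop) ω
      ≤ liminf (fun n => π (Xs n) ω) atTop := by
  set Z : ℕ → Ω → EReal := fun n ω => ⨅ k ≥ n, Xs k ω
  have hZ : ∀ n, Z n ∈ Lbb F := tailInf_mem_Lbb (fun n => (hXs n).1) hbd
  have hZ_mono : ∀ ω, Monotone fun n => Z n ω :=
    fun ω _ _ hnm => le_iInf₂ fun k hk => iInf₂_le k (hnm.trans hk)
  have hsup := hcont Z _ hZ (liminf_mem_Lbb (fun n => (hXs n).1) hbd) hZ_mono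
    fun ω => liminf_eq_iSup_iInf_of_nat
  have hle : ∀ᵐ ω ∂P, ∀ n, ∀ k ≥ n, π (Z n) ω ≤ π (Xs k) ω := by
    simp only [ae_all_iff]
    intro n k hk
    exact hmono _ (hXs k) _ (hZ n) fun ω => iInf₂_le k hk
  filter_upwards [hsup, hle] with ω hsup hle
  rw [hsup, liminf_eq_iSup_iInf_of_nat]
  exact iSup_mono fun n => le_iInf₂ (hle n)

end LowerSemicontinuity

theorem stmt_0_general (F : MeasurableSpace Ω) (P : @Measure Ω F)
    (π : (Ω → EReal) → Ω → EReal)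
    (hmono : ∀ X ∈ Lbb F, ∀ Y ∈ Lbb F, (∀ ω, Y ω ≤ X ω) → ∀ᵐ ω ∂P, π Y ω ≤ π X ω)
    (hcont : ∀ (Zs : ℕ → Ω → EReal) (Z : Ω → EReal), (∀ n, Zs n ∈ Lbb F) → Z ∈ Lbb F →
      (∀ ω, Monotone fun n => Zs n ω) → (∀ ω, Z ω = ⨆ n, Zs n ω) →
      ∀ᵐ ω ∂P, π Z ω = ⨆ n, π (Zs n) ω)
    (Xs : ℕ → Ω → EReal) (X : Ω → EReal)
    (hXs : ∀ n, Xs n ∈ Lbb F)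
    (c : ℝ) (hbd : ∀ n ω, (c : EReal) ≤ Xs n ω)
    (Y : ℕ → Ω → EReal)
    (hYanti : ∀ ω, Antitone fun n => Y n ω)
    (hYinf : ∀ ω, (⨅ n, Y n ω) = 0)
    (hord : ∀ n ω, X ω - Y n ω ≤ Xs n ω ∧ Xs n ω ≤ X ω + Y n ω) :
    ∀ᵐ ω ∂P, π X ω ≤ liminf (fun n => π (Xs n) ω) atTop := by
  have hX : X = fun ω => liminf (fun n => Xs n ω) atTop := by
    funext ω
    have hY : Tendsto (fun n => Y n ω) atTop (𝓝 0) := hYinf ω ▸ tendsto_atTop_iInf (hYanti ω)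
    exact ((EReal.tendsto_of_sub_le_of_le_add hY fun n => hord n ω).liminf_eq).symm
  exact hX ▸ ae_apply_liminf_le_liminf_apply hmono hcont hXs hbd

/-- a monotone non-decreasing map `π : L^{bb}_T → L^{bb}_t` which is
continuous from below is order lower semicontinuous with respect to sequences
uniformly bounded from below: if `X_n ≥ c` for all `n` and `X_n` order-converges to
`X` (i.e. there is `Y_n ↓ 0` with `|X_n − X| ≤ Y_n`), then
`π(X) ≤ liminf_n π(X_n)` a.s. -/
theorem stmt_0 (F m : MeasurableSpace Ω) (hm : m ≤ F) (P : @Measure Ω F)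
    (π : (Ω → EReal) → Ω → EReal)
    (hmaps : ∀ X ∈ Lbb F, π X ∈ Lbb m)
    (hmono : ∀ X ∈ Lbb F, ∀ Y ∈ Lbb F, (∀ ω, Y ω ≤ X ω) → ∀ᵐ ω ∂P, π Y ω ≤ π X ω)
    (hcont : ∀ (Zs : ℕ → Ω → EReal) (Z : Ω → EReal), (∀ n, Zs n ∈ Lbb F) → Z ∈ Lbb F →
      (∀ ω, Monotone fun n => Zs n ω) → (∀ ω, Z ω = ⨆ n, Zs n ω) →
      ∀ᵐ ω ∂P, π Z ω = ⨆ n, π (Zs n) ω)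
    (Xs : ℕ → Ω → EReal) (X : Ω → EReal)
    (hXs : ∀ n, Xs n ∈ Lbb F) (hX : X ∈ Lbb F)
    (c : ℝ) (hbd : ∀ n ω, (c : EReal) ≤ Xs n ω)
    (Y : ℕ → Ω → EReal)
    (hY0 : ∀ n ω, 0 ≤ Y n ω)
    (hYanti : ∀ ω, Antitone fun n => Y n ω)
    (hYinf : ∀ ω, (⨅ n, Y n ω) = 0)
    (hord : ∀ n ω, X ω - Y n ω ≤ Xs n ω ∧ Xs n ω ≤ X ω + Y n ω) :
    ∀ᵐ ω ∂P, π X ω ≤ liminf (fun n => π (Xs n) ω) atTop :=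
  stmt_0_general F P π hmono hcont Xs X hXs c hbd Y hYanti hYinf hord
end
end

section
/- If a conditional performance measure β_t is scale invariant (β_t(cX) = β_t(X) for all real c > 0), then for every F_t-measurable ξ bounded from below, β_t(ξ) = β_t(1)·1_{ξ>0} + β_t(0)·1_{ξ≤0} almost surely. -/
open MeasureTheory Filter Set Topology

noncomputable section

variable {Ω : Type*}

/-- `ρ` is the `P`-essential infimum of the family `S` of (`m`-measurable)
random variables. -/
def IsEssInfFam {F : MeasurableSpace Ω} (m : MeasurableSpace Ω) (P : @Measure Ω F)
    (S : Set (Ω → EReal)) (ρ : Ω → EReal) : Prop :=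
  Measurable[m] ρ ∧ (∀ ξ ∈ S, ∀ᵐ ω ∂P, ρ ω ≤ ξ ω) ∧
    ∀ η : Ω → EReal, Measurable[m] η → (∀ ξ ∈ S, ∀ᵐ ω ∂P, η ω ≤ ξ ω) →
      ∀ᵐ ω ∂P, η ω ≤ ρ ω

/-- `g` is, on the set `C`, the `P`-essential supremum of the family `S`. -/
def IsEssSupFamOn {F : MeasurableSpace Ω} (m : MeasurableSpace Ω) (P : @Measure Ω F)
    (S : Set (Ω → EReal)) (g : Ω → EReal) (C : Set Ω) : Prop :=
  (∀ φ ∈ S, ∀ᵐ ω ∂P, ω ∈ C → φ ω ≤ g ω) ∧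
    ∀ η : Ω → EReal, Measurable[m] η → (∀ φ ∈ S, ∀ᵐ ω ∂P, ω ∈ C → φ ω ≤ η ω) →
      ∀ᵐ ω ∂P, ω ∈ C → g ω ≤ η ω

/-- A conditional performance measure (CPM) `β` conditional to the sub-σ-algebra `m`,
defined on `F`-measurable variables bounded from below, with non-random essential
bounds `zd < zu`. -/
structure IsCPM (F m : MeasurableSpace Ω) (P : @Measure Ω F)
    (β : (Ω → EReal) → Ω → EReal) (zd zu : EReal) : Prop where
  maps : ∀ X ∈ Lbb F, β X ∈ Lbb m
  quasiConcave : ∀ X ∈ Lbb F, ∀ Y ∈ Lbb F, ∀ c : ℝ, 0 ≤ c → c ≤ 1 →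
    ∀ᵐ ω ∂P, min (β X ω) (β Y ω) ≤
      β (fun ω' => (c : EReal) * X ω' + ((1 - c : ℝ) : EReal) * Y ω') ω
  lt_bounds : zd < zu
  le_zu : ∀ X ∈ Lbb F, ∀ᵐ ω ∂P, β X ω ≤ zu
  zu_least : ∀ η : Ω → EReal, Measurable[m] η →
    (∀ X ∈ Lbb F, ∀ᵐ ω ∂P, β X ω ≤ η ω) → ∀ᵐ ω ∂P, zu ≤ η ω
  zd_le : ∀ X ∈ Lbb F, ∀ᵐ ω ∂P, zd ≤ β X ω
  zd_greatest : ∀ η : Ω → EReal, Measurable[m] η →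
    (∀ X ∈ Lbb F, ∀ᵐ ω ∂P, η ω ≤ β X ω) → ∀ᵐ ω ∂P, η ω ≤ zd
  mono : ∀ X Y : Ω → EReal, (∀ ω, Y ω ≤ X ω) → ∀ᵐ ω ∂P, β Y ω ≤ β X ω
  strictShift : ∀ X ∈ Lbb F, ∀ c : ℝ, 0 < c →
    ∀ᵐ ω ∂P, β X ω < zu → zd < β (fun ω' => X ω' + (c : EReal)) ω →
      β X ω < β (fun ω' => X ω' + (c : EReal)) ω
  contBelow : ∀ (Xs : ℕ → Ω → EReal) (X : Ω → EReal), (∀ n, Xs n ∈ Lbb F) → X ∈ Lbb F →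
    (∀ ω, Monotone fun n => Xs n ω) → (∀ ω, X ω = ⨆ n, Xs n ω) →
    ∀ᵐ ω ∂P, β X ω = ⨆ n, β (Xs n) ω
  loc : ∀ X ∈ Lbb F, ∀ B : Set Ω, MeasurableSet[m] B →
    ∀ᵐ ω ∂P, ω ∈ B → β X ω = β (B.indicator X) ω
  levelBdd : ∀ z : ℝ, zd < (z : EReal) → (z : EReal) < zu →
    ∃ x : ℝ, ∀ ξ ∈ Lbb m, (∀ᵐ ω ∂P, (z : EReal) ≤ β ξ ω) → ∀ᵐ ω ∂P, (x : EReal) ≤ ξ ω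

/-- Scale invariance of a conditional performance measure. -/
def ScaleInvariant (F : MeasurableSpace Ω) (P : @Measure Ω F)
    (β : (Ω → EReal) → Ω → EReal) : Prop :=
  ∀ X ∈ Lbb F, ∀ c : ℝ, 0 < c → ∀ᵐ ω ∂P, β (fun ω' => (c : EReal) * X ω') ω = β X ω

/-- The set `M^z_t(X) = {ξ ∈ L^{bb}_t : β_t(X + ξ) ≥ z}`. -/
def Mset (F m : MeasurableSpace Ω) (P : @Measure Ω F)
    (β : (Ω → EReal) → Ω → EReal) (z : ℝ) (X : Ω → EReal) : Set (Ω → EReal) :=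
  {ξ | ξ ∈ Lbb m ∧ ∀ᵐ ω ∂P, (z : EReal) ≤ β (fun ω' => X ω' + ξ ω') ω}

/-- The family of simple `m`-measurable variables `φ = Σ z_i 1_{B_i}` with
`zd < φ < zu` and `ρ^{z_i} < 0` on `B_i ∩ C`. -/
def SimpleFam {F : MeasurableSpace Ω} (m : MeasurableSpace Ω) (P : @Measure Ω F)
    (ρ : ℝ → Ω → EReal) (zd zu : EReal) (C : Set Ω) : Set (Ω → EReal) :=
  {φ | ∃ (n : ℕ) (zs : Fin n → ℝ) (Bs : Fin n → Set Ω),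
    (∀ i, MeasurableSet[m] (Bs i)) ∧ Pairwise (Function.onFun Disjoint Bs) ∧
    (⋃ i, Bs i) = Set.univ ∧
    (∀ i, zd < (zs i : EReal) ∧ (zs i : EReal) < zu) ∧
    (∀ i, ∀ ω ∈ Bs i, φ ω = (zs i : EReal)) ∧
    (∀ i, ∀ᵐ ω ∂P, ω ∈ Bs i ∩ C → ρ (zs i) ω < 0)}

/-- A standard family of conditional convex risk measures `(σ^z)_{z ∈ (zd, zu)}`. -/
structure IsStdFamily (F m : MeasurableSpace Ω) (P : @Measure Ω F)
    (σ : ℝ → (Ω → EReal) → Ω → EReal) (zd zu : EReal) : Prop where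
  lt_bounds : zd < zu
  maps : ∀ z : ℝ, zd < (z : EReal) → (z : EReal) < zu → ∀ X ∈ Lbb F,
    Measurable[m] (σ z X) ∧ ∃ C : ℝ, ∀ ω, σ z X ω ≤ (C : EReal)
  boundedOnBounded : ∀ z : ℝ, zd < (z : EReal) → (z : EReal) < zu → ∀ X ∈ Lbb F,
    (∃ C : ℝ, ∀ ω, X ω ≤ (C : EReal)) → ∃ c : ℝ, ∀ ω, (c : EReal) ≤ σ z X ω
  convex : ∀ z : ℝ, zd < (z : EReal) → (z : EReal) < zu →
    ∀ X ∈ Lbb F, ∀ Y ∈ Lbb F, ∀ c : ℝ, 0 ≤ c → c ≤ 1 →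
    ∀ᵐ ω ∂P, σ z (fun ω' => (c : EReal) * X ω' + ((1 - c : ℝ) : EReal) * Y ω') ω ≤
      (c : EReal) * σ z X ω + ((1 - c : ℝ) : EReal) * σ z Y ω
  anti : ∀ z : ℝ, zd < (z : EReal) → (z : EReal) < zu → ∀ X Y : Ω → EReal,
    (∀ ω, Y ω ≤ X ω) → ∀ᵐ ω ∂P, σ z X ω ≤ σ z Y ω
  transInv : ∀ z : ℝ, zd < (z : EReal) → (z : EReal) < zu → ∀ X ∈ Lbb F, ∀ ξ ∈ Lbb m,
    ∀ᵐ ω ∂P, σ z (fun ω' => X ω' + ξ ω') ω = σ z X ω - ξ ω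
  loc : ∀ z : ℝ, zd < (z : EReal) → (z : EReal) < zu → ∀ X ∈ Lbb F,
    ∀ B : Set Ω, MeasurableSet[m] B →
    ∀ᵐ ω ∂P, ω ∈ B → σ z X ω = σ z (B.indicator X) ω
  contBelow : ∀ z : ℝ, zd < (z : EReal) → (z : EReal) < zu →
    ∀ (Xs : ℕ → Ω → EReal) (X : Ω → EReal), (∀ n, Xs n ∈ Lbb F) → X ∈ Lbb F →
    (∀ ω, Monotone fun n => Xs n ω) → (∀ ω, X ω = ⨆ n, Xs n ω) →
    ∀ᵐ ω ∂P, σ z X ω = ⨅ n, σ z (Xs n) ω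
  paths : ∀ X ∈ Lbb F, ∀ᵐ ω ∂P,
    MonotoneOn (fun z : ℝ => σ z X ω) {z : ℝ | zd < (z : EReal) ∧ (z : EReal) < zu} ∧
    ContinuousOn (fun z : ℝ => σ z X ω) {z : ℝ | zd < (z : EReal) ∧ (z : EReal) < zu}
  botLim : zd = ⊥ →
    Tendsto (fun z : ℝ => essSup (σ z (fun _ => 0)) P) atBot (𝓝 (⊥ : EReal))

/-- The set `B_X = ∩_{z ∈ (zd,zu)} {σ^z(X) ≥ 0}`. -/
def BXset (σ : ℝ → (Ω → EReal) → Ω → EReal) (zd zu : EReal) (X : Ω → EReal) : Set Ω :=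
  {ω | ∀ z : ℝ, zd < (z : EReal) → (z : EReal) < zu → 0 ≤ σ z X ω}

/-- `g` is the value at `X` of the performance measure generated by the standard
family `σ`:  `g = zd 1_{B_X} + 1_{B_X^c} esssup{φ simple : σ^{z_i}(X) < 0 on B_i ∩ B_X^c}`. -/
def GeneratedBy (F m : MeasurableSpace Ω) (P : @Measure Ω F)
    (σ : ℝ → (Ω → EReal) → Ω → EReal) (zd zu : EReal)
    (X : Ω → EReal) (g : Ω → EReal) : Prop :=
  (∀ᵐ ω ∂P, ω ∈ BXset σ zd zu X → g ω = zd) ∧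
  IsEssSupFamOn m P (SimpleFam m P (fun z => σ z X) zd zu ((BXset σ zd zu X)ᶜ)) g
    ((BXset σ zd zu X)ᶜ)

lemma ereal_iSup_min (x : EReal) :
    ⨆ n : ℕ, min x (((n:ℝ) + 1 : ℝ) : EReal) = x := by
  refine le_antisymm (iSup_le fun n => min_le_left _ _) ?_
  rw [le_iSup_iff]
  intro b hb
  by_contra hbx
  push_neg at hbx
  have hball : ∀ n : ℕ, (((n:ℝ) + 1 : ℝ) : EReal) ≤ b := by
    intro n
    have := hb n
    rcases min_cases x (((n:ℝ) + 1 : ℝ) : EReal) with ⟨h1, _⟩ | ⟨h1, _⟩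
    · rw [h1] at this; exact absurd this (not_le.2 hbx)
    · rw [h1] at this; exact this
  have hbt : b ≠ ⊤ := fun h => absurd (h ▸ hbx) (by simp)
  have hbb : b ≠ ⊥ :=
    (lt_of_lt_of_le (EReal.bot_lt_coe _) (hball 0)).ne'
  lift b to ℝ using ⟨hbt, hbb⟩
  obtain ⟨n, hn⟩ := exists_nat_gt b
  have := hball n
  rw [EReal.coe_le_coe_iff] at this
  linarith

lemma ereal_iSup_pow_mul {a : ℝ} (ha : a < 0) :
    ⨆ n : ℕ, (((1/2 : ℝ) ^ n * a : ℝ) : EReal) = 0 := by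
  refine le_antisymm (iSup_le fun n => ?_) ?_
  · have : (1/2 : ℝ) ^ n * a ≤ 0 :=
      mul_nonpos_of_nonneg_of_nonpos (by positivity) ha.le
    exact_mod_cast this
  · rw [le_iSup_iff]
    intro b hb
    by_contra hb0
    push_neg at hb0
    have hbb : b ≠ ⊥ :=
      (lt_of_lt_of_le (EReal.bot_lt_coe _) (hb 0)).ne'
    have hbt : b ≠ ⊤ := fun h => absurd (h ▸ hb0) (by simp)
    lift b to ℝ using ⟨hbt, hbb⟩
    have hb0' : b < 0 := by exact_mod_cast hb0
    obtain ⟨n, hn⟩ : ∃ n : ℕ, (1/2 : ℝ) ^ n < b / a := by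
      exact exists_pow_lt_of_lt_one (div_pos_of_neg_of_neg hb0' ha) (by norm_num)
    have h2 : b < (1/2 : ℝ) ^ n * a := by
      have h3 := mul_lt_mul_of_neg_right hn ha
      rwa [div_mul_cancel₀ b ha.ne] at h3
    have := hb n
    rw [EReal.coe_le_coe_iff] at this
    linarith

lemma exists_one_div_le {x : EReal} (hx : 0 < x) :
    ∃ k : ℕ, ((1 / ((k:ℝ) + 1) : ℝ) : EReal) ≤ x := by
  rcases eq_or_ne x ⊤ with h | h
  · exact ⟨0, h ▸ le_top⟩
  · lift x to ℝ using ⟨h, (LT.lt.ne' (lt_of_le_of_lt bot_le hx) : x ≠ ⊥)⟩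
    have hx' : 0 < x := by exact_mod_cast hx
    obtain ⟨k, hk⟩ := exists_nat_one_div_lt hx'
    exact ⟨k, by exact_mod_cast hk.le⟩

/-- If a CPM `β_t` is scale invariant, then for every `F_t`-measurable
`ξ` bounded from below, `β_t(ξ) = β_t(1) 1_{ξ>0} + β_t(0) 1_{ξ≤0}` a.s. -/
theorem stmt_1 {Ω : Type*} (F m : MeasurableSpace Ω) (hm : m ≤ F) (P : @Measure Ω F)
    (β : (Ω → EReal) → Ω → EReal) (zd zu : EReal)
    (hCPM : IsCPM F m P β zd zu) (hscale : ScaleInvariant F P β)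
    (ξ : Ω → EReal) (hξ : ξ ∈ Lbb m) :
    ∀ᵐ ω ∂P, (0 < ξ ω → β ξ ω = β (fun _ => 1) ω) ∧
      (ξ ω ≤ 0 → β ξ ω = β (fun _ => 0) ω) := by
  obtain ⟨hξm, a, ha⟩ := hξ
  have hξF : Measurable[F] ξ := hξm.mono hm le_rfl
  have h1Lbb : (fun _ : Ω => (1 : EReal)) ∈ Lbb F :=
    ⟨measurable_const, 1, fun ω => by norm_num⟩
  have h0Lbb : (fun _ : Ω => (0 : EReal)) ∈ Lbb F :=
    ⟨measurable_const, 0, fun ω => by norm_num⟩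
  -- Part 1 : on {ξ ≥ 1/(k+1)}, β ξ = β 1
  have part1 : ∀ k : ℕ, ∀ᵐ ω ∂P,
      ((1 / ((k : ℝ) + 1) : ℝ) : EReal) ≤ ξ ω → β ξ ω = β (fun _ => 1) ω := by
    intro k
    set r : ℝ := 1 / ((k : ℝ) + 1) with hrdef
    have hrpos : 0 < r := by positivity
    have hr1 : r ≤ 1 := by
      rw [hrdef, div_le_one (by positivity)]
      linarith [Nat.cast_nonneg (α := ℝ) k]
    set B : Set Ω := {ω | (r : EReal) ≤ ξ ω} with hBdef
    have hBm : MeasurableSet[m] B := hξm measurableSet_Ici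
    set oneB : Ω → EReal := B.indicator (fun _ => 1) with honeBdef
    set Y : Ω → EReal := B.indicator ξ with hYdef
    have hYlb : ∀ ω, ((min a 0 : ℝ) : EReal) ≤ Y ω := by
      intro ω
      by_cases hω : ω ∈ B
      · rw [hYdef, indicator_of_mem hω]
        exact le_trans (by exact_mod_cast min_le_left a 0) (ha ω)
      · rw [hYdef, indicator_of_notMem hω]
        exact_mod_cast min_le_right a 0
    have hYF : Y ∈ Lbb F := ⟨hξF.indicator (hm _ hBm), min a 0, hYlb⟩
    have honeBF : oneB ∈ Lbb F := by
      refine ⟨measurable_const.indicator (hm _ hBm), 0, fun ω => ?_⟩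
      by_cases hω : ω ∈ B <;> simp [honeBdef, hω]
    set Zs : ℕ → Ω → EReal := fun n ω => min (Y ω) (((n : ℝ) + 1 : ℝ) : EReal)
      with hZdef
    have hZF : ∀ n, Zs n ∈ Lbb F := by
      intro n
      refine ⟨hYF.1.min measurable_const, min a 0, fun ω => le_min (hYlb ω) ?_⟩
      have h1 : (min a 0 : ℝ) ≤ (n : ℝ) + 1 := by
        have := Nat.cast_nonneg (α := ℝ) n
        have := min_le_right a 0
        linarith
      exact_mod_cast h1
    have hmonoZ : ∀ ω, Monotone fun n => Zs n ω := by
      intro ω i j hij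
      refine min_le_min le_rfl ?_
      have h1 : (i : ℝ) + 1 ≤ (j : ℝ) + 1 := by
        have : (i : ℝ) ≤ (j : ℝ) := Nat.cast_le.2 hij
        linarith
      exact_mod_cast h1
    have hsup : ∀ ω, Y ω = ⨆ n, Zs n ω := fun ω => (ereal_iSup_min (Y ω)).symm
    have hCB := hCPM.contBelow Zs Y hZF hYF hmonoZ hsup
    have hEqn : ∀ n : ℕ, ∀ᵐ ω ∂P, β (Zs n) ω = β oneB ω := by
      intro n
      have hpt1 : ∀ ω, (r : EReal) * oneB ω ≤ Zs n ω := by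
        intro ω
        by_cases hω : ω ∈ B
        · rw [honeBdef, indicator_of_mem hω, mul_one, hZdef]
          refine le_min ?_ ?_
          · rw [hYdef, indicator_of_mem hω]; exact hω
          · have h1 : r ≤ (n : ℝ) + 1 := by
              have := Nat.cast_nonneg (α := ℝ) n
              linarith
            exact_mod_cast h1
        · rw [honeBdef, indicator_of_notMem hω, mul_zero, hZdef]
          refine le_min ?_ ?_
          · rw [hYdef, indicator_of_notMem hω]
          · have h1 : (0 : ℝ) ≤ (n : ℝ) + 1 := by positivity
            exact_mod_cast h1
      have hpt2 : ∀ ω, Zs n ω ≤ (((n : ℝ) + 1 : ℝ) : EReal) * oneB ω := by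
        intro ω
        by_cases hω : ω ∈ B
        · rw [honeBdef, indicator_of_mem hω, mul_one, hZdef]
          exact min_le_right _ _
        · rw [honeBdef, indicator_of_notMem hω, mul_zero]
          have h0 : Y ω = 0 := by rw [hYdef, indicator_of_notMem hω]
          simp only [hZdef, h0]
          exact min_le_left _ _
      have hm1 := hCPM.mono (Zs n) (fun ω => (r : EReal) * oneB ω) hpt1
      have hm2 := hCPM.mono (fun ω => (((n : ℝ) + 1 : ℝ) : EReal) * oneB ω)
        (Zs n) hpt2
      have hs1 := hscale oneB honeBF r hrpos
      have hs2 := hscale oneB honeBF ((n : ℝ) + 1) (by positivity)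
      filter_upwards [hm1, hm2, hs1, hs2] with ω h1 h2 h3 h4
      exact le_antisymm (h4 ▸ h2) (h3 ▸ h1)
    have hEq := ae_all_iff.2 hEqn
    have hloc1 := hCPM.loc ξ ⟨hξF, a, ha⟩ B hBm
    have hloc2 := hCPM.loc (fun _ => (1 : EReal)) h1Lbb B hBm
    filter_upwards [hCB, hEq, hloc1, hloc2] with ω h1 h2 h3 h4 hmem
    rw [h3 hmem, h4 hmem]
    rw [show B.indicator ξ = Y from rfl, show B.indicator (fun _ => (1 : EReal)) = oneB from rfl]
    rw [h1]
    simp only [h2, iSup_const]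
  -- Part 2 : on {ξ ≤ 0}, β ξ = β 0
  have part2 : ∀ᵐ ω ∂P, ξ ω ≤ 0 → β ξ ω = β (fun _ => 0) ω := by
    set a' : ℝ := min a (-1) with ha'def
    have ha'neg : a' < 0 := lt_of_le_of_lt (min_le_right _ _) (by norm_num)
    set B : Set Ω := {ω | ξ ω ≤ 0} with hBdef
    have hBm : MeasurableSet[m] B := hξm measurableSet_Iic
    set W : Ω → EReal := B.indicator (fun _ => (a' : EReal)) with hWdef
    have hWF : W ∈ Lbb F := by
      refine ⟨measurable_const.indicator (hm _ hBm), a', fun ω => ?_⟩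
      by_cases hω : ω ∈ B
      · rw [hWdef, indicator_of_mem hω]
      · rw [hWdef, indicator_of_notMem hω]
        exact_mod_cast ha'neg.le
    set Xs : ℕ → Ω → EReal :=
      fun n => B.indicator (fun _ => (((1/2 : ℝ) ^ n * a' : ℝ) : EReal)) with hXdef
    have hXeq : ∀ n : ℕ,
        (fun ω => (((1/2 : ℝ) ^ n : ℝ) : EReal) * W ω) = Xs n := by
      intro n
      funext ω
      by_cases hω : ω ∈ B
      · rw [hXdef]
        simp only [indicator_of_mem hω, hWdef]
        rw [← EReal.coe_mul]
      · rw [hXdef]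
        simp only [indicator_of_notMem hω, hWdef, mul_zero]
    have hXF : ∀ n, Xs n ∈ Lbb F := by
      intro n
      refine ⟨measurable_const.indicator (hm _ hBm), (1/2 : ℝ) ^ n * a',
        fun ω => ?_⟩
      by_cases hω : ω ∈ B
      · simp only [hXdef, indicator_of_mem hω, le_refl]
      · simp only [hXdef, indicator_of_notMem hω]
        have h1 : (1/2 : ℝ) ^ n * a' ≤ 0 :=
          mul_nonpos_of_nonneg_of_nonpos (by positivity) ha'neg.le
        exact_mod_cast h1
    have hmonoX : ∀ ω, Monotone fun n => Xs n ω := by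
      intro ω i j hij
      by_cases hω : ω ∈ B
      · simp only [hXdef, indicator_of_mem hω]
        have h1 : (1/2 : ℝ) ^ i * a' ≤ (1/2 : ℝ) ^ j * a' := by
          have hp : (1/2 : ℝ) ^ j ≤ (1/2 : ℝ) ^ i :=
            pow_le_pow_of_le_one (by norm_num) (by norm_num) hij
          exact mul_le_mul_of_nonpos_right hp ha'neg.le
        exact_mod_cast h1
      · simp only [hXdef, indicator_of_notMem hω, le_refl]
    have hsupX : ∀ ω, (fun _ : Ω => (0 : EReal)) ω = ⨆ n, Xs n ω := by
      intro ω
      by_cases hω : ω ∈ B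
      · simp only [hXdef, indicator_of_mem hω]
        exact (ereal_iSup_pow_mul ha'neg).symm
      · simp only [hXdef, indicator_of_notMem hω, iSup_const]
    have hCB := hCPM.contBelow Xs (fun _ => 0) hXF h0Lbb hmonoX hsupX
    have hEqn : ∀ n : ℕ, ∀ᵐ ω ∂P, β (Xs n) ω = β W ω := by
      intro n
      have hs := hscale W hWF ((1/2 : ℝ) ^ n) (by positivity)
      rw [show (fun ω' => (((1/2 : ℝ) ^ n : ℝ) : EReal) * W ω') = Xs n from hXeq n]
        at hs
      exact hs
    have hEq := ae_all_iff.2 hEqn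
    have hpt1 : ∀ ω, W ω ≤ B.indicator ξ ω := by
      intro ω
      by_cases hω : ω ∈ B
      · rw [hWdef, indicator_of_mem hω, indicator_of_mem hω]
        exact le_trans (EReal.coe_le_coe_iff.mpr (min_le_left a (-1))) (ha ω)
      · rw [hWdef, indicator_of_notMem hω, indicator_of_notMem hω]
    have hpt2 : ∀ ω, B.indicator ξ ω ≤ (fun _ : Ω => (0 : EReal)) ω := by
      intro ω
      by_cases hω : ω ∈ B
      · rw [indicator_of_mem hω]; exact hω
      · rw [indicator_of_notMem hω]
    have hm1 := hCPM.mono (B.indicator ξ) W hpt1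
    have hm2 := hCPM.mono (fun _ : Ω => (0 : EReal)) (B.indicator ξ) hpt2
    have hloc1 := hCPM.loc ξ ⟨hξF, a, ha⟩ B hBm
    filter_upwards [hCB, hEq, hm1, hm2, hloc1] with ω h1 h2 h3 h4 h5 hmem
    have hW0 : β W ω = β (fun _ : Ω => (0 : EReal)) ω := by
      rw [h1]
      simp only [h2, iSup_const]
    rw [h5 hmem]
    exact le_antisymm h4 (hW0 ▸ h3)
  filter_upwards [ae_all_iff.2 part1, part2] with ω h1 h2
  refine ⟨fun hpos => ?_, h2⟩
  obtain ⟨k, hk⟩ := exists_one_div_le hpos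
  exact h1 k hk
end
end

section
/- Let β_t be a CPM and for z_d < z < z_u define the induced risk measure ρ^z_t(X) = ess inf{ξ ∈ L^{bb}_t : β_t(X+ξ) ≥ z}. Then ρ^z_t is local: 1_B ρ^z_t(X) = 1_B ρ^z_t(X·1_B) for all B ∈ F_t. -/
open MeasureTheory Filter Set Topology

noncomputable section

variable {Ω : Type*}

section AuxStmt5

private lemma measurable_add_ereal {α : Type*} {mα : MeasurableSpace α} {f g : α → EReal}
    (hf : Measurable f) (hg : Measurable g) : Measurable (fun x => f x + g x) := by
  have key : ∀ c : ℝ, (fun x => f x + g x) ⁻¹' (Ioi (c : EReal)) =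
      ⋃ q : ℚ, (f ⁻¹' Ioi ((q : ℝ) : EReal)) ∩ (g ⁻¹' Ioi ((c - q : ℝ) : EReal)) := by
    intro c
    ext x
    simp only [mem_preimage, mem_Ioi, mem_iUnion, mem_inter_iff]
    constructor
    · intro h
      have hfb : f x ≠ ⊥ := by
        intro hb; rw [hb, EReal.bot_add] at h; exact absurd h (by simp)
      have hgb : g x ≠ ⊥ := by
        intro hb; rw [hb, EReal.add_bot] at h; exact absurd h (by simp)
      by_cases hgt : g x = ⊤
      · obtain ⟨q, _, hq2⟩ := EReal.exists_rat_btwn_of_lt (Ne.bot_lt hfb)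
        exact ⟨q, hq2, by rw [hgt]; exact EReal.coe_lt_top _⟩
      · have hgr : ((g x).toReal : EReal) = g x := EReal.coe_toReal hgt hgb
        by_cases hft : f x = ⊤
        · obtain ⟨q, hq⟩ := exists_rat_gt (c - (g x).toReal)
          refine ⟨q, by rw [hft]; exact EReal.coe_lt_top _, ?_⟩
          rw [← hgr]
          exact_mod_cast by linarith
        · have hfr : ((f x).toReal : EReal) = f x := EReal.coe_toReal hft hfb
          have hcc : c < (f x).toReal + (g x).toReal := by
            have : ((c : ℝ) : EReal) < (((f x).toReal + (g x).toReal : ℝ) : EReal) := by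
              rw [EReal.coe_add, hfr, hgr]; exact h
            exact_mod_cast this
          obtain ⟨q, hq1, hq2⟩ := exists_rat_btwn (show c - (g x).toReal < (f x).toReal by linarith)
          refine ⟨q, ?_, ?_⟩
          · rw [← hfr]; exact_mod_cast hq2
          · rw [← hgr]; exact_mod_cast by linarith
    · rintro ⟨q, h1, h2⟩
      have : ((c : ℝ) : EReal) = ((q : ℝ) : EReal) + ((c - q : ℝ) : EReal) := by
        rw [← EReal.coe_add]; norm_num
      rw [this]
      exact EReal.add_lt_add h1 h2
  have hreal : ∀ c : ℝ, MeasurableSet ((fun x => f x + g x) ⁻¹' Ioi (c : EReal)) := by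
    intro c
    rw [key c]
    exact MeasurableSet.iUnion fun q =>
      (hf (measurableSet_Ioi)).inter (hg (measurableSet_Ioi))
  apply measurable_of_Ioi
  intro c
  induction c using EReal.rec with
  | coe c => exact hreal c
  | top => simp
  | bot =>
    have : (fun x => f x + g x) ⁻¹' Ioi (⊥ : EReal) =
        ⋃ q : ℚ, (fun x => f x + g x) ⁻¹' Ioi ((q : ℝ) : EReal) := by
      ext x
      simp only [mem_preimage, mem_Ioi, mem_iUnion]
      constructor
      · intro h
        obtain ⟨q, _, hq2⟩ := EReal.exists_rat_btwn_of_lt h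
        exact ⟨q, hq2⟩
      · intro ⟨q, hq⟩
        exact lt_trans (EReal.bot_lt_coe _) hq
    rw [this]
    exact MeasurableSet.iUnion fun q => hreal q


open Classical in
/-- The indicator of `Bᶜ` with value `⊤` is in `Lbb F`. -/
private lemma lbb_top_indicator {F m : MeasurableSpace Ω} (hm : m ≤ F)
    {B : Set Ω} (hB : MeasurableSet[m] B) :
    (Bᶜ.indicator (fun _ => (⊤ : EReal))) ∈ Lbb F := by
  refine ⟨measurable_const.indicator (hm _ hB.compl), 0, fun ω => ?_⟩
  by_cases h : ω ∈ Bᶜ <;> simp [Set.indicator_of_mem, Set.indicator_of_notMem, h]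

/-- On `Bᶜ`, the value of `β` at `⊤ · 1_{Bᶜ}` is at least `zu`. -/
private lemma beta_top_ind {F m : MeasurableSpace Ω} (hm : m ≤ F) {P : @Measure Ω F}
    {β : (Ω → EReal) → Ω → EReal} {zd zu : EReal}
    (hCPM : IsCPM F m P β zd zu)
    {B : Set Ω} (hB : MeasurableSet[m] B) :
    ∀ᵐ ω ∂P, ω ∈ Bᶜ → zu ≤ β (Bᶜ.indicator (fun _ => (⊤ : EReal))) ω := by
  classical
  set T : Ω → EReal := Bᶜ.indicator (fun _ => (⊤ : EReal)) with hTdef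
  have hTLbb : T ∈ Lbb F := lbb_top_indicator hm hB
  set η : Ω → EReal := Bᶜ.piecewise (β T) (fun _ => (⊤ : EReal)) with hηdef
  have hηm : Measurable[m] η :=
    Measurable.piecewise hB.compl (hCPM.maps T hTLbb).1 measurable_const
  have hub : ∀ V ∈ Lbb F, ∀ᵐ ω ∂P, β V ω ≤ η ω := by
    intro V hV
    have h1 := hCPM.loc V hV Bᶜ hB.compl
    have hle : ∀ ω, Bᶜ.indicator V ω ≤ T ω := by
      intro ω
      by_cases hω : ω ∈ Bᶜ <;>
        simp [hTdef, Set.indicator_of_mem, Set.indicator_of_notMem, hω]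
    have h2 := hCPM.mono T (Bᶜ.indicator V) hle
    filter_upwards [h1, h2] with ω h1 h2
    by_cases hω : ω ∈ Bᶜ
    · rw [hηdef]
      rw [Set.piecewise_eq_of_mem _ _ _ hω]
      calc β V ω = β (Bᶜ.indicator V) ω := h1 hω
        _ ≤ β T ω := h2
    · rw [hηdef, Set.piecewise_eq_of_notMem _ _ _ hω]
      exact le_top
  have hzu := hCPM.zu_least η hηm hub
  filter_upwards [hzu] with ω hzu hω
  rw [hηdef, Set.piecewise_eq_of_mem _ _ _ hω] at hzu
  exact hzu

open Classical in
/-- Core pasting lemma: if `β (Y + ξ) ≥ z` a.e. on `B` and `Y' = Y` on `B`, then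
`B.piecewise ξ ⊤` belongs to `Mset F m P β z Y'`. -/
private lemma core_paste {F m : MeasurableSpace Ω} (hm : m ≤ F) {P : @Measure Ω F}
    {β : (Ω → EReal) → Ω → EReal} {zd zu : EReal}
    (hCPM : IsCPM F m P β zd zu)
    {z : ℝ} (hz₂ : (z : EReal) < zu)
    {B : Set Ω} (hB : MeasurableSet[m] B)
    {Y Y' : Ω → EReal} (hY : Y ∈ Lbb F) (hY' : Y' ∈ Lbb F)
    (hag : ∀ ω ∈ B, Y' ω = Y ω)
    {ξ : Ω → EReal} (hξ : ξ ∈ Lbb m)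
    (h : ∀ᵐ ω ∂P, ω ∈ B → (z : EReal) ≤ β (fun ω' => Y ω' + ξ ω') ω) :
    B.piecewise ξ (fun _ => (⊤ : EReal)) ∈ Mset F m P β z Y' := by
  obtain ⟨hξm, cξ, hcξ⟩ := hξ
  obtain ⟨hY'm, cY', hcY'⟩ := hY'
  obtain ⟨hYm, cY, hcY⟩ := hY
  set ξ'' : Ω → EReal := B.piecewise ξ (fun _ => (⊤ : EReal)) with hξ''def
  have hξ''m : Measurable[m] ξ'' := Measurable.piecewise hB hξm measurable_const
  have hξ''lb : ∀ ω, (cξ : EReal) ≤ ξ'' ω := by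
    intro ω
    by_cases hω : ω ∈ B
    · rw [hξ''def, Set.piecewise_eq_of_mem _ _ _ hω]; exact hcξ ω
    · rw [hξ''def, Set.piecewise_eq_of_notMem _ _ _ hω]; exact le_top
  set W : Ω → EReal := fun ω => Y' ω + ξ'' ω with hWdef
  have hWm : Measurable[F] W := measurable_add_ereal hY'm (hξ''m.mono hm le_rfl)
  have hWLbb : W ∈ Lbb F := by
    refine ⟨hWm, cY' + cξ, fun ω => ?_⟩
    rw [EReal.coe_add]
    exact add_le_add (hcY' ω) (hξ''lb ω)
  have hYξLbb : (fun ω => Y ω + ξ ω) ∈ Lbb F := by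
    refine ⟨measurable_add_ereal hYm (hξm.mono hm le_rfl), cY + cξ, fun ω => ?_⟩
    rw [EReal.coe_add]
    exact add_le_add (hcY ω) (hcξ ω)
  have hindeq : B.indicator W = B.indicator (fun ω => Y ω + ξ ω) := by
    funext ω
    by_cases hω : ω ∈ B
    · rw [Set.indicator_of_mem hω, Set.indicator_of_mem hω, hWdef]
      simp only
      rw [hag ω hω, hξ''def, Set.piecewise_eq_of_mem _ _ _ hω]
    · rw [Set.indicator_of_notMem hω, Set.indicator_of_notMem hω]
  have hindeq2 : Bᶜ.indicator W = Bᶜ.indicator (fun _ => (⊤ : EReal)) := by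
    funext ω
    by_cases hω : ω ∈ Bᶜ
    · rw [Set.indicator_of_mem hω, Set.indicator_of_mem hω, hWdef]
      simp only
      rw [hξ''def, Set.piecewise_eq_of_notMem _ _ _ hω]
      exact EReal.add_top_of_ne_bot
        ((lt_of_lt_of_le (EReal.bot_lt_coe cY') (hcY' ω)).ne')
    · rw [Set.indicator_of_notMem hω, Set.indicator_of_notMem hω]
  have hlocB := hCPM.loc W hWLbb B hB
  have hlocB' := hCPM.loc (fun ω => Y ω + ξ ω) hYξLbb B hB
  have hlocBc := hCPM.loc W hWLbb Bᶜ hB.compl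
  have htop := beta_top_ind hm hCPM hB
  refine ⟨⟨hξ''m, cξ, hξ''lb⟩, ?_⟩
  filter_upwards [h, hlocB, hlocB', hlocBc, htop] with ω hω₁ hlB hlB' hlBc htop
  show (z : EReal) ≤ β W ω
  by_cases hω : ω ∈ B
  · rw [hlB hω, hindeq, ← hlB' hω]
    exact hω₁ hω
  · have hωc : ω ∈ Bᶜ := hω
    have heq : β W ω = β (Bᶜ.indicator (fun _ => (⊤ : EReal))) ω := by
      rw [hlBc hωc, hindeq2]
    rw [heq]
    exact le_trans hz₂.le (htop hωc)

end AuxStmt5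

/-- the induced risk measure `ρ^z_t` is local:
`1_B ρ^z_t(X) = 1_B ρ^z_t(X 1_B)` for all `B ∈ F_t`. -/
theorem stmt_5 {Ω : Type*} (F m : MeasurableSpace Ω) (hm : m ≤ F) (P : @Measure Ω F)
    (β : (Ω → EReal) → Ω → EReal) (zd zu : EReal)
    (hCPM : IsCPM F m P β zd zu)
    (z : ℝ) (hz₁ : zd < (z : EReal)) (hz₂ : (z : EReal) < zu)
    (X : Ω → EReal) (hX : X ∈ Lbb F)
    (B : Set Ω) (hB : MeasurableSet[m] B)
    (ρ₁ ρ₂ : Ω → EReal)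
    (h₁ : IsEssInfFam m P (Mset F m P β z X) ρ₁)
    (h₂ : IsEssInfFam m P (Mset F m P β z (B.indicator X)) ρ₂) :
    ∀ᵐ ω ∂P, ω ∈ B → ρ₁ ω = ρ₂ ω := by
  classical
  obtain ⟨hXm, cX, hcX⟩ := hX
  have hX' : X ∈ Lbb F := ⟨hXm, cX, hcX⟩
  have hBX : B.indicator X ∈ Lbb F := by
    refine ⟨hXm.indicator (hm _ hB), min cX 0, fun ω => ?_⟩
    by_cases hω : ω ∈ B
    · rw [Set.indicator_of_mem hω]
      exact le_trans (by exact_mod_cast min_le_left cX 0) (hcX ω)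
    · rw [Set.indicator_of_notMem hω]
      exact_mod_cast min_le_right cX 0
  -- pasting candidates across B
  have transfer1 : ∀ ξ ∈ Mset F m P β z X,
      B.piecewise ξ (fun _ => (⊤ : EReal)) ∈ Mset F m P β z (B.indicator X) := by
    intro ξ hξ
    exact core_paste hm hCPM hz₂ hB hX' hBX (fun ω hω => Set.indicator_of_mem hω X)
      hξ.1 (hξ.2.mono fun ω h _ => h)
  have transfer2 : ∀ ξ ∈ Mset F m P β z (B.indicator X),
      B.piecewise ξ (fun _ => (⊤ : EReal)) ∈ Mset F m P β z X := by
    intro ξ hξ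
    exact core_paste hm hCPM hz₂ hB hBX hX' (fun ω hω => (Set.indicator_of_mem hω X).symm)
      hξ.1 (hξ.2.mono fun ω h _ => h)
  -- ρ₂ is below every element of Mset(X) on B, and symmetrically
  have hρ₂le : ∀ ξ ∈ Mset F m P β z X, ∀ᵐ ω ∂P, ω ∈ B → ρ₂ ω ≤ ξ ω := by
    intro ξ hξ
    filter_upwards [h₂.2.1 _ (transfer1 ξ hξ)] with ω h hω
    rwa [Set.piecewise_eq_of_mem _ _ _ hω] at h
  have hρ₁le : ∀ ξ ∈ Mset F m P β z (B.indicator X), ∀ᵐ ω ∂P, ω ∈ B → ρ₁ ω ≤ ξ ω := by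
    intro ξ hξ
    filter_upwards [h₁.2.1 _ (transfer2 ξ hξ)] with ω h hω
    rwa [Set.piecewise_eq_of_mem _ _ _ hω] at h
  -- direction ρ₂ ≤ ρ₁ on B
  have dir1 : ∀ᵐ ω ∂P, ω ∈ B → ρ₂ ω ≤ ρ₁ ω := by
    have hlb : ∀ ξ ∈ Mset F m P β z X, ∀ᵐ ω ∂P, B.piecewise ρ₂ ρ₁ ω ≤ ξ ω := by
      intro ξ hξ
      filter_upwards [hρ₂le ξ hξ, h₁.2.1 ξ hξ] with ω ha hb
      by_cases hω : ω ∈ B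
      · rw [Set.piecewise_eq_of_mem _ _ _ hω]; exact ha hω
      · rw [Set.piecewise_eq_of_notMem _ _ _ hω]; exact hb
    have := h₁.2.2 (B.piecewise ρ₂ ρ₁) (Measurable.piecewise hB h₂.1 h₁.1) hlb
    filter_upwards [this] with ω h hω
    rwa [Set.piecewise_eq_of_mem _ _ _ hω] at h
  -- direction ρ₁ ≤ ρ₂ on B
  have dir2 : ∀ᵐ ω ∂P, ω ∈ B → ρ₁ ω ≤ ρ₂ ω := by
    have hlb : ∀ ξ ∈ Mset F m P β z (B.indicator X),
        ∀ᵐ ω ∂P, B.piecewise ρ₁ ρ₂ ω ≤ ξ ω := by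
      intro ξ hξ
      filter_upwards [hρ₁le ξ hξ, h₂.2.1 ξ hξ] with ω ha hb
      by_cases hω : ω ∈ B
      · rw [Set.piecewise_eq_of_mem _ _ _ hω]; exact ha hω
      · rw [Set.piecewise_eq_of_notMem _ _ _ hω]; exact hb
    have := h₂.2.2 (B.piecewise ρ₁ ρ₂) (Measurable.piecewise hB h₁.1 h₂.1) hlb
    filter_upwards [this] with ω h hω
    rwa [Set.piecewise_eq_of_mem _ _ _ hω] at h
  filter_upwards [dir1, dir2] with ω h1 h2 hω
  exact le_antisymm (h2 hω) (h1 hω)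
end
end

section
/- Let β_t be a CPM and ρ^z_t(X) = ess inf{ξ ∈ L^{bb}_t : β_t(X+ξ) ≥ z} its induced risk measure for z_d < z < z_u. Then for any B ∈ F_t: β_t(X) > z on B if and only if ρ^z_t(X) < 0 on B; equivalently, β_t(X) ≤ z on B if and only if ρ^z_t(X) ≥ 0 on B. -/
/-!
Where `z < β X`, continuity from below gives `δ > 0` with `z < β (X - δ)`; by locality the
variable equal to `-δ` there and to `+∞` elsewhere is acceptable, so `ρ < 0`. Where `β X ≤ z`, an
acceptable `ξ` with `ξ ≤ -δ` would force `z ≤ β (X + ξ) ≤ β (X - δ) ≤ β X ≤ z`, contradicting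
strict monotonicity under the shift by `δ`; hence every acceptable `ξ`, and so `ρ`, is `≥ 0` there.
-/

open MeasureTheory Filter Set Topology

noncomputable section

variable {Ω : Type*}

lemma EReal.iSup_add_neg_one_div_succ (x : EReal) (hx : x ≠ ⊥) :
    ⨆ n : ℕ, x + ((-(1 / (n + 1)) : ℝ) : EReal) = x := by
  have hmono : Monotone fun n : ℕ => x + ((-(1 / (n + 1)) : ℝ) : EReal) := fun a b hab =>
    add_le_add_right (EReal.coe_le_coe_iff.2 (neg_le_neg (Nat.one_div_le_one_div hab))) x
  have hlim : Tendsto (fun n : ℕ => x + ((-(1 / (n + 1)) : ℝ) : EReal)) atTop (𝓝 (x + 0)) := by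
    have hcoe : Tendsto (fun n : ℕ => ((-(1 / (n + 1)) : ℝ) : EReal)) atTop (𝓝 0) := by
      simpa using EReal.tendsto_coe.2 tendsto_one_div_add_atTop_nhds_zero_nat.neg
    exact (EReal.continuousAt_add (p := (x, 0)) (by simp) (Or.inl hx)).tendsto.comp
      (tendsto_const_nhds.prodMk_nhds hcoe)
  rw [add_zero] at hlim
  exact tendsto_nhds_unique (tendsto_atTop_iSup hmono) hlim

namespace Lbb

variable {m F : MeasurableSpace Ω} {X Y ξ : Ω → EReal}

lemma ne_bot (hX : X ∈ Lbb m) (ω : Ω) : X ω ≠ ⊥ := by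
  obtain ⟨-, c, hc⟩ := hX
  exact ((EReal.bot_lt_coe c).trans_le (hc ω)).ne'

lemma const_mem (c : EReal) (hc : c ≠ ⊥) : (fun _ : Ω => c) ∈ Lbb m := by
  obtain ⟨r, -, hr⟩ := EReal.exists_between_coe_real (bot_lt_iff_ne_bot.2 hc)
  exact ⟨measurable_const, r, fun _ => hr.le⟩

lemma add (hm : m ≤ F) (hX : X ∈ Lbb F) (hξ : ξ ∈ Lbb m) :
    (fun ω => X ω + ξ ω) ∈ Lbb F := by
  obtain ⟨hXm, c, hc⟩ := hX
  obtain ⟨hξm, d, hd⟩ := hξ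
  refine ⟨hXm.add (hξm.mono hm le_rfl), c + d, fun ω => ?_⟩
  rw [EReal.coe_add]
  exact add_le_add (hc ω) (hd ω)

lemma add_const (hX : X ∈ Lbb F) (c : ℝ) : (fun ω => X ω + (c : EReal)) ∈ Lbb F :=
  add le_rfl hX (const_mem _ (EReal.coe_ne_bot c))

lemma min (hX : X ∈ Lbb F) (hY : Y ∈ Lbb F) : (fun ω => Min.min (X ω) (Y ω)) ∈ Lbb F := by
  obtain ⟨hXm, c, hc⟩ := hX
  obtain ⟨hYm, d, hd⟩ := hY
  have hcd : ((Min.min c d : ℝ) : EReal) ≤ c := EReal.coe_le_coe_iff.2 (min_le_left c d)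
  have hdc : ((Min.min c d : ℝ) : EReal) ≤ d := EReal.coe_le_coe_iff.2 (min_le_right c d)
  exact ⟨hXm.min hYm, Min.min c d, fun ω => le_min (hcd.trans (hc ω)) (hdc.trans (hd ω))⟩

lemma piecewise {S : Set Ω} [DecidablePred (· ∈ S)] (hS : MeasurableSet[m] S)
    (hX : X ∈ Lbb m) (hY : Y ∈ Lbb m) : S.piecewise X Y ∈ Lbb m := by
  obtain ⟨hXm, c, hc⟩ := hX
  obtain ⟨hYm, d, hd⟩ := hY
  have hcd : ((Min.min c d : ℝ) : EReal) ≤ c := EReal.coe_le_coe_iff.2 (min_le_left c d)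
  have hdc : ((Min.min c d : ℝ) : EReal) ≤ d := EReal.coe_le_coe_iff.2 (min_le_right c d)
  refine ⟨hXm.piecewise hS hYm, Min.min c d, fun ω => ?_⟩
  by_cases hω : ω ∈ S
  · simpa only [piecewise_eq_of_mem S X Y hω] using hcd.trans (hc ω)
  · simpa only [piecewise_eq_of_notMem S X Y hω] using hdc.trans (hd ω)

end Lbb

namespace IsCPM

variable {F m : MeasurableSpace Ω} {P : @Measure Ω F} {β : (Ω → EReal) → Ω → EReal}
  {zd zu : EReal} {z : ℝ} {X ξ : Ω → EReal}

lemma ae_eq_of_eqOn (hβ : IsCPM F m P β zd zu) {Y Y' : Ω → EReal} (hY : Y ∈ Lbb F)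
    (hY' : Y' ∈ Lbb F) {A : Set Ω} (hA : MeasurableSet[m] A) (h : EqOn Y Y' A) :
    ∀ᵐ ω ∂P, ω ∈ A → β Y ω = β Y' ω := by
  filter_upwards [hβ.loc Y hY A hA, hβ.loc Y' hY' A hA] with ω hY hY' hω
  rw [hY hω, hY' hω, indicator_congr h]

lemma ae_le_top (hβ : IsCPM F m P β zd zu) : ∀ᵐ ω ∂P, zu ≤ β (fun _ => ⊤) ω :=
  hβ.zu_least _ (hβ.maps _ (Lbb.const_mem ⊤ (by simp))).1
    fun Y _ => hβ.mono _ Y fun _ => le_top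

lemma ae_neg_lt_of_mem_Mset (hβ : IsCPM F m P β zd zu) (hm : m ≤ F) (hz₁ : zd < (z : EReal))
    (hz₂ : (z : EReal) < zu) (hX : X ∈ Lbb F) (hξ : ξ ∈ Mset F m P β z X) {δ : ℝ}
    (hδ : 0 < δ) : ∀ᵐ ω ∂P, β X ω ≤ (z : EReal) → ((-δ : ℝ) : EReal) < ξ ω := by
  obtain ⟨hξL, hξβ⟩ := hξ
  set Xδ : Ω → EReal := fun ω => X ω + ((-δ : ℝ) : EReal)
  set E : Set Ω := {ω | β X ω ≤ (z : EReal) ∧ ξ ω ≤ ((-δ : ℝ) : EReal)}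
  have hE : MeasurableSet[m] E :=
    ((hβ.maps X hX).1 measurableSet_Iic).inter (hξL.1 measurableSet_Iic)
  have hXξ := Lbb.add hm hX hξL
  have hXδ : Xδ ∈ Lbb F := Lbb.add_const hX (-δ)
  set W : Ω → EReal := fun ω => min (X ω + ξ ω) (Xδ ω)
  have hW_eq := hβ.ae_eq_of_eqOn (Lbb.min hXξ hXδ) hXξ hE fun ω hω =>
    min_eq_left (add_le_add_right hω.2 _)
  have hW_le := hβ.mono Xδ W fun ω => min_le_right _ _
  have hXδ_le := hβ.mono X Xδ fun ω =>
    add_le_of_nonpos_right (EReal.coe_nonpos.2 (neg_nonpos.2 hδ.le))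
  have hshift : (fun ω => Xδ ω + (δ : EReal)) = X := by
    funext ω
    rw [add_assoc, ← EReal.coe_add, neg_add_cancel, EReal.coe_zero, add_zero]
  have hstrict := hβ.strictShift Xδ hXδ δ hδ
  rw [hshift] at hstrict
  filter_upwards [hξβ, hW_eq, hW_le, hXδ_le, hstrict] with ω hz hWω hWXδ hXδX hlt hle
  by_contra! hξω
  have hzXδ : (z : EReal) ≤ β Xδ ω := (hz.trans_eq (hWω ⟨hle, hξω⟩).symm).trans hWXδ
  exact (hlt ((hXδX.trans hle).trans_lt hz₂) (hz₁.trans_le (hzXδ.trans hXδX))).not_ge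
    (hle.trans hzXδ)

lemma ae_nonneg_of_mem_Mset (hβ : IsCPM F m P β zd zu) (hm : m ≤ F) (hz₁ : zd < (z : EReal))
    (hz₂ : (z : EReal) < zu) (hX : X ∈ Lbb F) (hξ : ξ ∈ Mset F m P β z X) :
    ∀ᵐ ω ∂P, β X ω ≤ (z : EReal) → 0 ≤ ξ ω := by
  have h := ae_all_iff.2 fun n : ℕ =>
    hβ.ae_neg_lt_of_mem_Mset hm hz₁ hz₂ hX hξ (δ := 1 / (n + 1)) Nat.one_div_pos_of_nat
  filter_upwards [h] with ω hω hle
  refine EReal.ge_of_forall_gt_iff_ge.1 fun r hr => ?_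
  obtain ⟨n, hn⟩ := exists_nat_one_div_lt (neg_pos.2 (EReal.coe_neg'.1 hr))
  refine le_of_lt (lt_of_le_of_lt (EReal.coe_le_coe_iff.2 ?_) (hω n hle))
  linarith

lemma piecewise_mem_Mset (hβ : IsCPM F m P β zd zu) (hm : m ≤ F) (hz₂ : (z : EReal) < zu)
    (hX : X ∈ Lbb F) (c : ℝ) :
    {ω | (z : EReal) < β (fun ω' => X ω' + (c : EReal)) ω}.piecewise (fun _ => (c : EReal))
      (fun _ => ⊤) ∈ Mset F m P β z X := by
  set S := {ω | (z : EReal) < β (fun ω' => X ω' + (c : EReal)) ω}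
  have hS : MeasurableSet[m] S := (hβ.maps _ (Lbb.add_const hX c)).1 measurableSet_Ioi
  have hξ : S.piecewise (fun _ => (c : EReal)) (fun _ => ⊤) ∈ Lbb m :=
    Lbb.piecewise hS (Lbb.const_mem _ (EReal.coe_ne_bot c)) (Lbb.const_mem ⊤ (by simp))
  have hXξ := Lbb.add hm hX hξ
  have hS_eq := hβ.ae_eq_of_eqOn hXξ (Lbb.add_const hX c) hS fun ω hω => by
    simp only [piecewise_eq_of_mem S _ _ hω]
  have hSc_eq := hβ.ae_eq_of_eqOn hXξ (Lbb.const_mem ⊤ (by simp)) hS.compl fun ω hω => by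
    simp only [piecewise_eq_of_notMem S _ _ hω, EReal.add_top_of_ne_bot (Lbb.ne_bot hX ω)]
  refine ⟨hξ, ?_⟩
  filter_upwards [hS_eq, hSc_eq, hβ.ae_le_top] with ω h₁ h₂ htop
  by_cases hω : ω ∈ S
  · exact (h₁ hω).symm ▸ le_of_lt hω
  · exact (h₂ hω).symm ▸ (hz₂.trans_le htop).le

lemma ae_eq_iSup_add_neg_one_div_succ (hβ : IsCPM F m P β zd zu) (hX : X ∈ Lbb F) :
    ∀ᵐ ω ∂P, β X ω = ⨆ n : ℕ, β (fun ω' => X ω' + ((-(1 / (n + 1)) : ℝ) : EReal)) ω :=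
  hβ.contBelow _ X (fun _ => Lbb.add_const hX _) hX
    (fun ω _ _ hab => add_le_add_right
      (EReal.coe_le_coe_iff.2 (neg_le_neg (Nat.one_div_le_one_div hab))) (X ω))
    (fun ω => (EReal.iSup_add_neg_one_div_succ (X ω) (Lbb.ne_bot hX ω)).symm)

lemma ae_nonneg_of_isEssInfFam_of_le (hβ : IsCPM F m P β zd zu) (hm : m ≤ F)
    (hz₁ : zd < (z : EReal)) (hz₂ : (z : EReal) < zu) (hX : X ∈ Lbb F) {ρ : Ω → EReal}
    (hρ : IsEssInfFam m P (Mset F m P β z X) ρ) :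
    ∀ᵐ ω ∂P, β X ω ≤ (z : EReal) → 0 ≤ ρ ω := by
  set η : Ω → EReal := fun ω => if β X ω ≤ (z : EReal) then 0 else ⊥
  have hη : Measurable[m] η :=
    Measurable.ite ((hβ.maps X hX).1 measurableSet_Iic) measurable_const measurable_const
  have hη_le : ∀ ξ ∈ Mset F m P β z X, ∀ᵐ ω ∂P, η ω ≤ ξ ω := fun ξ hξ => by
    filter_upwards [hβ.ae_nonneg_of_mem_Mset hm hz₁ hz₂ hX hξ] with ω hω
    by_cases hle : β X ω ≤ (z : EReal)
    · simpa [η, hle] using hω hle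
    · simp [η, hle]
  filter_upwards [hρ.2.2 η hη hη_le] with ω hω hle
  simpa [η, hle] using hω

lemma ae_neg_of_isEssInfFam_of_lt (hβ : IsCPM F m P β zd zu) (hm : m ≤ F)
    (hz₂ : (z : EReal) < zu) (hX : X ∈ Lbb F) {ρ : Ω → EReal}
    (hρ : IsEssInfFam m P (Mset F m P β z X) ρ) :
    ∀ᵐ ω ∂P, (z : EReal) < β X ω → ρ ω < 0 := by
  have hρ_le := ae_all_iff.2 fun n : ℕ =>
    hρ.2.1 _ (hβ.piecewise_mem_Mset hm hz₂ hX (-(1 / (n + 1))))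
  filter_upwards [hρ_le, hβ.ae_eq_iSup_add_neg_one_div_succ hX] with ω hρω hβω hlt
  obtain ⟨n, hn⟩ := lt_iSup_iff.1 (hβω ▸ hlt)
  exact ((hρω n).trans_eq (piecewise_eq_of_mem _ _ _ hn)).trans_lt
    (EReal.coe_neg'.2 (neg_neg_of_pos Nat.one_div_pos_of_nat))

end IsCPM

theorem stmt_6_general {Ω : Type*} (F m : MeasurableSpace Ω) (hm : m ≤ F) (P : @Measure Ω F)
    (β : (Ω → EReal) → Ω → EReal) (zd zu : EReal)
    (hCPM : IsCPM F m P β zd zu)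
    (z : ℝ) (hz₁ : zd < (z : EReal)) (hz₂ : (z : EReal) < zu)
    (X : Ω → EReal) (hX : X ∈ Lbb F)
    (ρ : Ω → EReal) (hρ : IsEssInfFam m P (Mset F m P β z X) ρ)
    (B : Set Ω) :
    ((∀ᵐ ω ∂P, ω ∈ B → (z : EReal) < β X ω) ↔ (∀ᵐ ω ∂P, ω ∈ B → ρ ω < 0)) ∧
    ((∀ᵐ ω ∂P, ω ∈ B → β X ω ≤ (z : EReal)) ↔ (∀ᵐ ω ∂P, ω ∈ B → 0 ≤ ρ ω)) := by
  have hiff : ∀ᵐ ω ∂P, ((z : EReal) < β X ω ↔ ρ ω < 0) := by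
    filter_upwards [hCPM.ae_neg_of_isEssInfFam_of_lt hm hz₂ hX hρ,
      hCPM.ae_nonneg_of_isEssInfFam_of_le hm hz₁ hz₂ hX hρ] with ω hneg hnonneg
    exact ⟨hneg, fun hρω => lt_of_not_ge fun hle => (hnonneg hle).not_gt hρω⟩
  exact ⟨eventually_congr (hiff.mono fun _ h => imp_congr_right fun _ => h),
    eventually_congr (hiff.mono fun _ h => imp_congr_right fun _ => by
      simpa only [not_lt] using not_congr h)⟩

/-- for `B ∈ F_t`, `β_t(X) > z` on `B` iff `ρ^z_t(X) < 0` on `B`;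
equivalently `β_t(X) ≤ z` on `B` iff `ρ^z_t(X) ≥ 0` on `B`. -/
theorem stmt_6 {Ω : Type*} (F m : MeasurableSpace Ω) (hm : m ≤ F) (P : @Measure Ω F)
    (β : (Ω → EReal) → Ω → EReal) (zd zu : EReal)
    (hCPM : IsCPM F m P β zd zu)
    (z : ℝ) (hz₁ : zd < (z : EReal)) (hz₂ : (z : EReal) < zu)
    (X : Ω → EReal) (hX : X ∈ Lbb F)
    (ρ : Ω → EReal) (hρ : IsEssInfFam m P (Mset F m P β z X) ρ)
    (B : Set Ω) (hB : MeasurableSet[m] B) :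
    ((∀ᵐ ω ∂P, ω ∈ B → (z : EReal) < β X ω) ↔ (∀ᵐ ω ∂P, ω ∈ B → ρ ω < 0)) ∧
    ((∀ᵐ ω ∂P, ω ∈ B → β X ω ≤ (z : EReal)) ↔ (∀ᵐ ω ∂P, ω ∈ B → 0 ≤ ρ ω)) :=
  stmt_6_general F m hm P β zd zu hCPM z hz₁ hz₂ X hX ρ hρ B
end
end

section
/- Let β_t be a CPM and ρ^z_t its induced risk measure for z_d < z < z_u. If β_t is scale invariant, then ρ^z_t is positively homogeneous: ρ^z_t(kX) = k·ρ^z_t(X) for all reals k > 0, hence ρ^z_t is a conditional coherent risk measure. -/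
open MeasureTheory Filter Set Topology

noncomputable section

variable {Ω : Type*}

/-! Scale invariance gives `β (k X + k ξ) = β (X + ξ)`, so `ξ ↦ k ξ` maps `M^z(X)` onto
`M^z(k X)`, with inverse `ξ ↦ k⁻¹ ξ`. Being an order isomorphism of the random variables that
preserves `m`-measurability, it carries the essential infimum of one set to that of the other. -/

lemma EReal.coe_inv_mul_cancel_left₀ {k : ℝ} (hk : k ≠ 0) (x : EReal) :
    ((k⁻¹ : ℝ) : EReal) * ((k : EReal) * x) = x := by
  rw [← mul_assoc, ← EReal.coe_mul, inv_mul_cancel₀ hk, EReal.coe_one, one_mul]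

lemma Lbb_mono {m F : MeasurableSpace Ω} (hm : m ≤ F) : Lbb m ⊆ Lbb F :=
  fun _ ⟨hξ, hbdd⟩ => ⟨hξ.mono hm le_rfl, hbdd⟩

lemma add_mem_Lbb {m : MeasurableSpace Ω} {X Y : Ω → EReal} (hX : X ∈ Lbb m)
    (hY : Y ∈ Lbb m) : (fun ω => X ω + Y ω) ∈ Lbb m := by
  obtain ⟨hXm, a, ha⟩ := hX
  obtain ⟨hYm, b, hb⟩ := hY
  refine ⟨hXm.add hYm, a + b, fun ω => ?_⟩
  rw [EReal.coe_add]
  exact add_le_add (ha ω) (hb ω)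

lemma const_mul_mem_Lbb {m : MeasurableSpace Ω} {X : Ω → EReal} (hX : X ∈ Lbb m)
    {k : ℝ} (hk : 0 ≤ k) : (fun ω => (k : EReal) * X ω) ∈ Lbb m := by
  obtain ⟨hXm, c, hc⟩ := hX
  refine ⟨hXm.const_mul _, k * c, fun ω => ?_⟩
  rw [EReal.coe_mul]
  exact mul_le_mul_of_nonneg_left (hc ω) (EReal.coe_nonneg.2 hk)

lemma const_mul_mem_Mset {F m : MeasurableSpace Ω} (hm : m ≤ F) {P : @Measure Ω F}
    {β : (Ω → EReal) → Ω → EReal} (hscale : ScaleInvariant F P β) {z : ℝ}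
    {X : Ω → EReal} (hX : X ∈ Lbb F) {k : ℝ} (hk : 0 < k) {ξ : Ω → EReal}
    (hξ : ξ ∈ Mset F m P β z X) :
    (fun ω => (k : EReal) * ξ ω) ∈ Mset F m P β z (fun ω => (k : EReal) * X ω) := by
  obtain ⟨hξL, hξβ⟩ := hξ
  refine ⟨const_mul_mem_Lbb hξL hk.le, ?_⟩
  have hdistrib : (fun ω => (k : EReal) * X ω + (k : EReal) * ξ ω) =
      fun ω => (k : EReal) * (X ω + ξ ω) := by
    funext ω
    exact (EReal.left_distrib_of_nonneg_of_ne_top (EReal.coe_nonneg.2 hk.le)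
      (EReal.coe_ne_top k) _ _).symm
  filter_upwards [hξβ, hscale _ (add_mem_Lbb hX (Lbb_mono hm hξL)) k hk] with ω hω hscaled
  rwa [hdistrib, hscaled]

lemma IsEssInfFam.const_mul {F m : MeasurableSpace Ω} {P : @Measure Ω F}
    {S T : Set (Ω → EReal)} {ρS ρT : Ω → EReal} (hS : IsEssInfFam m P S ρS)
    (hT : IsEssInfFam m P T ρT) {k : ℝ} (hk : 0 < k)
    (hST : ∀ ξ ∈ S, (fun ω => (k : EReal) * ξ ω) ∈ T)
    (hTS : ∀ ξ ∈ T, (fun ω => ((k⁻¹ : ℝ) : EReal) * ξ ω) ∈ S) :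
    ∀ᵐ ω ∂P, ρT ω = (k : EReal) * ρS ω := by
  have hk₀ : (0 : EReal) ≤ k := EReal.coe_nonneg.2 hk.le
  have hk₀' : (0 : EReal) ≤ ((k⁻¹ : ℝ) : EReal) := EReal.coe_nonneg.2 (inv_nonneg.2 hk.le)
  have hcancel (x : EReal) : (k : EReal) * ((k⁻¹ : ℝ) * x) = x := by
    simpa using EReal.coe_inv_mul_cancel_left₀ (inv_ne_zero hk.ne') x
  have hle : ∀ᵐ ω ∂P, (k : EReal) * ρS ω ≤ ρT ω := by
    refine hT.2.2 _ (hS.1.const_mul _) fun ξ hξ => ?_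
    filter_upwards [hS.2.1 _ (hTS ξ hξ)] with ω hω
    simpa only [hcancel] using mul_le_mul_of_nonneg_left hω hk₀
  have hge : ∀ᵐ ω ∂P, ((k⁻¹ : ℝ) : EReal) * ρT ω ≤ ρS ω := by
    refine hS.2.2 _ (hT.1.const_mul _) fun ξ hξ => ?_
    filter_upwards [hT.2.1 _ (hST ξ hξ)] with ω hω
    simpa only [EReal.coe_inv_mul_cancel_left₀ hk.ne'] using mul_le_mul_of_nonneg_left hω hk₀'
  filter_upwards [hle, hge] with ω hle hge
  refine le_antisymm ?_ hle
  simpa only [hcancel] using mul_le_mul_of_nonneg_left hge hk₀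

theorem stmt_9_general {Ω : Type*} (F m : MeasurableSpace Ω) (hm : m ≤ F) (P : @Measure Ω F)
    (β : (Ω → EReal) → Ω → EReal) (hscale : ScaleInvariant F P β) (z : ℝ)
    (X : Ω → EReal) (hX : X ∈ Lbb F) (k : ℝ) (hk : 0 < k) (ρX ρk : Ω → EReal)
    (h₁ : IsEssInfFam m P (Mset F m P β z X) ρX)
    (h₂ : IsEssInfFam m P (Mset F m P β z (fun ω => (k : EReal) * X ω)) ρk) :
    ∀ᵐ ω ∂P, ρk ω = (k : EReal) * ρX ω := by
  refine h₁.const_mul h₂ hk (fun ξ hξ => const_mul_mem_Mset hm hscale hX hk hξ) fun ξ hξ => ?_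
  have hback := const_mul_mem_Mset hm hscale (const_mul_mem_Lbb hX hk.le) (inv_pos.2 hk) hξ
  simpa only [EReal.coe_inv_mul_cancel_left₀ hk.ne'] using hback

/-- if `β_t` is scale invariant then `ρ^z_t` is positively homogeneous:
`ρ^z_t(kX) = k ρ^z_t(X)` for all `k > 0`. -/
theorem stmt_9 {Ω : Type*} (F m : MeasurableSpace Ω) (hm : m ≤ F) (P : @Measure Ω F)
    (β : (Ω → EReal) → Ω → EReal) (zd zu : EReal)
    (hCPM : IsCPM F m P β zd zu) (hscale : ScaleInvariant F P β)
    (z : ℝ) (hz₁ : zd < (z : EReal)) (hz₂ : (z : EReal) < zu)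
    (X : Ω → EReal) (hX : X ∈ Lbb F)
    (k : ℝ) (hk : 0 < k)
    (ρX ρk : Ω → EReal)
    (h₁ : IsEssInfFam m P (Mset F m P β z X) ρX)
    (h₂ : IsEssInfFam m P (Mset F m P β z (fun ω => (k : EReal) * X ω)) ρk) :
    ∀ᵐ ω ∂P, ρk ω = (k : EReal) * ρX ω :=
  stmt_9_general F m hm P β hscale z X hX k hk ρX ρk h₁ h₂
end
end

section
/- The dynamic Gain-Loss Ratio is time consistent: for 0 ≤ s < t ≤ T and any integrable X, if GLR_t(X) > z a.s. for some z > 0, then GLR_s(X) > z a.s., where GLR_t(X) = E[X | F_t]/E[X^− | F_t] on {E[X | F_t] > 0} and 0 otherwise (with convention ξ/0 = +∞ for ξ > 0). -/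
open MeasureTheory Filter Set

/-!
Since `E[X⁻ | F_u] ≥ 0` and `z > 0`, the event `GLR_u(X) > z` coincides a.s. with
`E[X - z X⁻ | F_u] > 0`. By the tower property `E[X - z X⁻ | F_s]` is the conditional
expectation of the a.s. positive variable `E[X - z X⁻ | F_t]`, hence is itself a.s. positive.
-/

/-- The `m`-measurable set `{μ[f|m] ≤ 0}` carries a nonpositive integral of `f`, so it is null. -/
lemma ae_pos_condExp_of_ae_pos {Ω : Type*} {m m₀ : MeasurableSpace Ω} {μ : Measure Ω}
    (hm : m ≤ m₀) [SigmaFinite (μ.trim hm)] {f : Ω → ℝ} (hf : Integrable f μ)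
    (hpos : ∀ᵐ ω ∂μ, 0 < f ω) : ∀ᵐ ω ∂μ, 0 < μ[f | m] ω := by
  set A := {ω | μ[f | m] ω ≤ 0}
  have hA : MeasurableSet[m] A :=
    stronglyMeasurable_condExp.measurable (measurableSet_Iic (a := (0 : ℝ)))
  have hnonneg : 0 ≤ᵐ[μ.restrict A] f := ae_restrict_of_ae (hpos.mono fun _ h => h.le)
  have hint : ∫ ω in A, f ω ∂μ = 0 := by
    refine le_antisymm ?_ (setIntegral_nonneg_of_ae_restrict hnonneg)
    rw [← setIntegral_condExp hm hf hA]
    exact setIntegral_nonpos (hm _ hA) fun _ h => h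
  have hzero : f =ᵐ[μ.restrict A] 0 :=
    (integral_eq_zero_iff_of_nonneg_ae hnonneg hf.integrableOn).mp hint
  have hA_null : μ A = 0 := by
    rw [← Measure.restrict_eq_zero, ← ae_eq_bot, ← eventually_false_iff_eq_bot]
    filter_upwards [ae_restrict_of_ae hpos, hzero] with ω hω hω'
    simp [hω'] at hω
  filter_upwards [measure_eq_zero_iff_ae_notMem.mp hA_null] with ω hω
  exact not_le.mp hω

lemma coe_lt_gainLossRatio_iff {a b z : ℝ} (hb : 0 ≤ b) (hz : 0 < z) :
    (z : EReal) < (if 0 < a then (if b = 0 then ⊤ else ((a / b : ℝ) : EReal)) else 0) ↔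
      0 < a - z * b := by
  have hz' : ¬ (z : EReal) < 0 := by
    rw [← EReal.coe_zero, EReal.coe_lt_coe_iff]
    exact hz.asymm
  by_cases ha : 0 < a
  · rw [if_pos ha]
    rcases hb.eq_or_lt with rfl | hb
    · simp [ha]
    · rw [if_neg hb.ne', EReal.coe_lt_coe_iff, lt_div_iff₀ hb, sub_pos]
  · rw [if_neg ha, iff_false_intro hz', false_iff, not_lt]
    nlinarith

theorem stmt_19_general {Ω : Type*} [F : MeasurableSpace Ω] (P : Measure Ω) [IsProbabilityMeasure P]
    (𝔽 : ℝ → MeasurableSpace Ω) (hle : ∀ t, 𝔽 t ≤ F) (hfil : Monotone 𝔽)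
    (X : Ω → ℝ) (hint : Integrable X P)
    (GLR : ℝ → Ω → EReal)
    (hGLR : ∀ (u : ℝ) (ω : Ω), GLR u ω =
      if 0 < (P[X | 𝔽 u]) ω then
        (if (P[(fun ω' => max (-X ω') 0) | 𝔽 u]) ω = 0 then (⊤ : EReal)
         else (((P[X | 𝔽 u]) ω / (P[(fun ω' => max (-X ω') 0) | 𝔽 u]) ω : ℝ) : EReal))
      else 0)
    (s t : ℝ) (hst : s < t) (z : ℝ) (hz : 0 < z)
    (h : ∀ᵐ ω ∂P, (z : EReal) < GLR t ω) :
    ∀ᵐ ω ∂P, (z : EReal) < GLR s ω := by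
  set Xneg : Ω → ℝ := fun ω => max (-X ω) 0
  have hXneg : Integrable Xneg P := hint.neg_part
  have hGLR_iff : ∀ u, ∀ᵐ ω ∂P, (z : EReal) < GLR u ω ↔ 0 < P[X - z • Xneg | 𝔽 u] ω := by
    intro u
    filter_upwards [condExp_sub hint (hXneg.smul z) (𝔽 u), condExp_smul z Xneg (𝔽 u),
      condExp_nonneg (μ := P) (m := 𝔽 u) (Eventually.of_forall fun ω => le_max_right (-X ω) 0)]
      with ω hsub hsmul hnonneg
    rw [hGLR, hsub, Pi.sub_apply, hsmul, Pi.smul_apply, smul_eq_mul]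
    exact coe_lt_gainLossRatio_iff hnonneg hz
  have hpos_t : ∀ᵐ ω ∂P, 0 < P[X - z • Xneg | 𝔽 t] ω := by
    filter_upwards [h, hGLR_iff t] with ω hω hiff using hiff.mp hω
  have hpos_s :=
    ae_pos_condExp_of_ae_pos (hle s) (integrable_condExp (m := 𝔽 t) (f := X - z • Xneg)) hpos_t
  filter_upwards [hpos_s,
      condExp_condExp_of_le (f := X - z • Xneg) (hfil hst.le) (hle t), hGLR_iff s]
    with ω hω htower hiff
  exact hiff.mpr (htower ▸ hω)

/-- the dynamic Gain-Loss Ratio is time consistent: for `s < t` and `z > 0`,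
if `GLR_t(X) > z` a.s. then `GLR_s(X) > z` a.s., where
`GLR_u(X) = E[X | F_u] / E[X⁻ | F_u]` on `{E[X | F_u] > 0}` and `0` otherwise, with the
convention `ξ/0 = +∞` for `ξ > 0`. -/
theorem stmt_19 {Ω : Type*} [F : MeasurableSpace Ω] (P : Measure Ω) [IsProbabilityMeasure P]
    (𝔽 : ℝ → MeasurableSpace Ω) (hle : ∀ t, 𝔽 t ≤ F) (hfil : Monotone 𝔽)
    (X : Ω → ℝ) (hint : Integrable X P) (hbdd : ∃ c : ℝ, ∀ ω, c ≤ X ω)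
    (GLR : ℝ → Ω → EReal)
    (hGLR : ∀ (u : ℝ) (ω : Ω), GLR u ω =
      if 0 < (P[X | 𝔽 u]) ω then
        (if (P[(fun ω' => max (-X ω') 0) | 𝔽 u]) ω = 0 then (⊤ : EReal)
         else (((P[X | 𝔽 u]) ω / (P[(fun ω' => max (-X ω') 0) | 𝔽 u]) ω : ℝ) : EReal))
      else 0)
    (s t : ℝ) (hst : s < t) (z : ℝ) (hz : 0 < z)
    (h : ∀ᵐ ω ∂P, (z : EReal) < GLR t ω) :
    ∀ᵐ ω ∂P, (z : EReal) < GLR s ω :=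
  stmt_19_general (F := F) P 𝔽 hle hfil X hint GLR hGLR s t hst z hz h
end
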